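/- arXiv:1504.03447 — 2 statements merged into one kernel-verified Lean document; each statement's English description precedes it below -/
import Mathlib

section
/- There exists a constant C' < ∞, depending only on Q and the regularity constants c0, C0, such that for every x ∈ X and every 0 < t ≤ 1: ∫_t^1 H(B(x,r+t) \ B(x,r-t)) r^{-Q-1} dr ≤ C', where B(x,r-t) is interpreted as the empty set when r - t ≤ 0. -/
/-!
With `F ρ = H (B(x, ρ))` the integral is `∫_t^1 (F (r + t) - F (r - t)) r^(-Q-1) dr`. Shifting
the variable in each term leaves, up to a boundary piece near `u = 1` and a nonnegative piece on
`[0, 2t]` that can be dropped, `∫_{2t}^{1+t} F u ((u - t)^(-Q-1) - (u + t)^(-Q-1)) du`. By the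
mean value theorem the kernel difference is `≲ t u^(-Q-2)`, and regularity gives `F u ≲ u^Q`, so
the integrand is `≲ t u^(-2)`, whose integral over `[2t, ∞)` is bounded independently of `t`.
-/

open MeasureTheory Metric Set Filter
open scoped ENNReal NNReal Topology

noncomputable section

namespace Cutout

variable {X Ω : Type*} [MetricSpace X] [MeasurableSpace X]

/-- The radial measure `ρ(dr) = r^{-(Q+1)} dr` on `(0,1)`. -/
def rho (Q : ℝ) : Measure ℝ :=
  (volume.restrict (Set.Ioo (0:ℝ) 1)).withDensity fun r => ENNReal.ofReal (r ^ (-Q - 1))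

/-- Ahlfors–David `Q`-regularity of the measure `H` with constants `c0 < C0`. -/
def QRegular (H : Measure X) (Q c0 C0 : ℝ) : Prop :=
  0 < c0 ∧ c0 < C0 ∧
    ∀ (x : X) (r : ℝ), 0 < r → r < Metric.diam (Set.univ : Set X) →
      ENNReal.ofReal (c0 * r ^ Q) ≤ H (Metric.ball x r) ∧
        H (Metric.ball x r) ≤ ENNReal.ofReal (C0 * r ^ Q)

/-- The average density `A(H,x,t) = (∫_t^1 H(B(x,r)) r^{-Q-1} dr) / (-log t)`. -/
def avg (H : Measure X) (Q : ℝ) (x : X) (t : ℝ) : ℝ :=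
  (∫ r in t..1, (H (Metric.ball x r)).toReal * r ^ (-Q - 1)) / (-Real.log t)

/-- Upper average density. -/
def Aup (H : Measure X) (Q : ℝ) (x : X) : ℝ :=
  Filter.limsup (fun t => avg H Q x t) (𝓝[>] (0:ℝ))

/-- Lower average density. -/
def Alow (H : Measure X) (Q : ℝ) (x : X) : ℝ :=
  Filter.liminf (fun t => avg H Q x t) (𝓝[>] (0:ℝ))

/-- `Δ_r(α,β) = {x : α < A(H,x,r) < β}`. -/
def DeltaR (H : Measure X) (Q α β r : ℝ) : Set X :=
  {x | α < avg H Q x r ∧ avg H Q x r < β}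

/-- `Δ(α) = {x : A(H,x) exists and equals α}`. -/
def Delta (H : Measure X) (Q α : ℝ) : Set X :=
  {x | Alow H Q x = α ∧ Aup H Q x = α}

/-- The cutout set `E = X \ ∪_{(x,r)∈Y} B(x,r)`. -/
def cutoutE (Y : Ω → Set (X × ℝ)) (ω : Ω) : Set X :=
  {z | ∀ p ∈ Y ω, z ∉ Metric.ball p.1 p.2}

/-- The partial cutout set `E_t = X \ ∪_{(x,r)∈Y, r>t} B(x,r)`. -/
def cutoutEt (Y : Ω → Set (X × ℝ)) (t : ℝ) (ω : Ω) : Set X :=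
  {z | ∀ p ∈ Y ω, t < p.2 → z ∉ Metric.ball p.1 p.2}

/-- `Y` is a Poisson point process on `X × (0,1)` with intensity measure `μ`:
counts on disjoint Borel sets are independent, and the count on a Borel set `A`
is Poisson distributed with mean `μ A`. -/
structure IsPoissonPP [MeasurableSpace Ω]
    (P : Measure Ω) (Y : Ω → Set (X × ℝ)) (μ : Measure (X × ℝ)) : Prop where
  radii : ∀ ω, ∀ p ∈ Y ω, p.2 ∈ Set.Ioo (0:ℝ) 1
  poisson : ∀ A : Set (X × ℝ), MeasurableSet A → μ A ≠ ⊤ → ∀ n : ℕ,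
    P {ω | (Y ω ∩ A).encard = n} =
      ENNReal.ofReal (Real.exp (-(μ A).toReal) * (μ A).toReal ^ n / n.factorial)
  poisson_top : ∀ A : Set (X × ℝ), MeasurableSet A → μ A = ⊤ →
    P {ω | (Y ω ∩ A).Finite} = 0
  indepCounts : ∀ (m : ℕ) (A : Fin m → Set (X × ℝ)),
    (∀ i, MeasurableSet (A i)) → (Pairwise fun i j => Disjoint (A i) (A j)) →
    ∀ n : Fin m → ℕ∞,
      P (⋂ i, {ω | (Y ω ∩ A i).encard = n i}) = ∏ i, P {ω | (Y ω ∩ A i).encard = n i}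

lemma rpow_sub_rpow_le_mul {Q a b : ℝ} (hQ : -1 ≤ Q) (ha : 0 < a) (hab : a ≤ b) :
    a ^ (-Q - 1) - b ^ (-Q - 1) ≤ (Q + 1) * (b - a) * a ^ (-Q - 2) := by
  rcases hab.eq_or_lt with rfl | hab
  · simp
  obtain ⟨c, hc, hslope⟩ := exists_hasDerivAt_eq_slope (fun s => s ^ (-Q - 1))
    (fun s => (-Q - 1) * s ^ (-Q - 1 - 1)) hab
    (fun s hs =>
      (Real.continuousAt_rpow_const _ _ (Or.inl (ha.trans_le hs.1).ne')).continuousWithinAt)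
    (fun s hs => Real.hasDerivAt_rpow_const (Or.inl (ha.trans hs.1).ne'))
  have hc_le : c ^ (-Q - 2) ≤ a ^ (-Q - 2) :=
    Real.rpow_le_rpow_of_nonpos ha hc.1.le (by linarith)
  rw [eq_div_iff (sub_ne_zero.2 hab.ne'), show -Q - 1 - 1 = -Q - 2 by ring] at hslope
  linarith [mul_le_mul_of_nonneg_left hc_le
    (mul_nonneg (by linarith : 0 ≤ Q + 1) (by linarith : 0 ≤ b - a))]

lemma _root_.Monotone.intervalIntegrable_mul_rpow_add {G : ℝ → ℝ} (hG : Monotone G)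
    {a b c s : ℝ} (hab : a ≤ b) (hac : 0 < a + c) :
    IntervalIntegrable (fun u => G u * (u + c) ^ s) volume a b := by
  refine hG.intervalIntegrable.mul_continuousOn ?_
  rw [uIcc_of_le hab]
  exact (continuousOn_id.add continuousOn_const).rpow_const
    fun u hu => Or.inl (by linarith [hu.1] : (0:ℝ) < u + c).ne'

lemma integral_rpow_neg_two_le {a b : ℝ} (ha : 0 < a) (hab : a ≤ b) :
    ∫ u in a..b, u ^ (-2 : ℝ) ≤ a⁻¹ := by
  rw [integral_rpow (Or.inr ⟨by norm_num, notMem_uIcc_of_lt ha (ha.trans_le hab)⟩)]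
  rw [show (-2 : ℝ) + 1 = -1 by norm_num, Real.rpow_neg_one, Real.rpow_neg_one, div_neg, div_one]
  linarith [inv_pos.2 (ha.trans_le hab)]

lemma mul_rpow_sub_rpow_le {y C Q t u : ℝ} (hQ : 0 ≤ Q) (hy0 : 0 ≤ y) (hy : y ≤ C * u ^ Q)
    (ht : 0 < t) (hu : 2 * t ≤ u) :
    y * ((u - t) ^ (-Q - 1) - (u + t) ^ (-Q - 1)) ≤
      C * (Q + 1) * 2 ^ (Q + 3) * t * u ^ (-2 : ℝ) := by
  have hu0 : 0 < u := by linarith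
  have hut : 0 < u - t := by linarith
  have hdiff_nonneg : 0 ≤ (u - t) ^ (-Q - 1) - (u + t) ^ (-Q - 1) :=
    sub_nonneg.2 (Real.rpow_le_rpow_of_nonpos hut (by linarith) (by linarith))
  have hhalf : (u - t) ^ (-Q - 2) ≤ 2 ^ (Q + 2) * u ^ (-Q - 2) := by
    calc (u - t) ^ (-Q - 2) ≤ (u / 2) ^ (-Q - 2) :=
          Real.rpow_le_rpow_of_nonpos (by positivity) (by linarith) (by linarith)
      _ = 2 ^ (Q + 2) * u ^ (-Q - 2) := by
          rw [Real.div_rpow hu0.le zero_le_two, show -Q - 2 = -(Q + 2) by ring,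
            Real.rpow_neg zero_le_two, div_eq_mul_inv, inv_inv, mul_comm]
  have hdiff : (u - t) ^ (-Q - 1) - (u + t) ^ (-Q - 1) ≤
      (Q + 1) * (2 * t) * (2 ^ (Q + 2) * u ^ (-Q - 2)) := by
    calc (u - t) ^ (-Q - 1) - (u + t) ^ (-Q - 1)
        ≤ (Q + 1) * (u + t - (u - t)) * (u - t) ^ (-Q - 2) :=
          rpow_sub_rpow_le_mul (by linarith) hut (by linarith)
      _ ≤ (Q + 1) * (2 * t) * (2 ^ (Q + 2) * u ^ (-Q - 2)) := by
          rw [show u + t - (u - t) = 2 * t by ring]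
          exact mul_le_mul_of_nonneg_left hhalf (by positivity)
  calc y * ((u - t) ^ (-Q - 1) - (u + t) ^ (-Q - 1))
      ≤ C * u ^ Q * ((Q + 1) * (2 * t) * (2 ^ (Q + 2) * u ^ (-Q - 2))) :=
        mul_le_mul hy hdiff hdiff_nonneg (hy0.trans hy)
    _ = C * (Q + 1) * (2 * 2 ^ (Q + 2)) * t * (u ^ Q * u ^ (-Q - 2)) := by ring
    _ = C * (Q + 1) * 2 ^ (Q + 3) * t * u ^ (-2 : ℝ) := by
        rw [← Real.rpow_add hu0, ← Real.rpow_one_add' zero_le_two (by positivity)]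
        ring_nf

section Shift

variable {F : ℝ → ℝ} {Q C t : ℝ}

lemma integral_sub_shift_mul_rpow (hF : Monotone F) (ht : 0 < t) (ht1 : t ≤ 1) :
    ∫ r in t..1, (F (r + t) - F (r - t)) * r ^ (-Q - 1) =
      (∫ u in (2 * t)..(1 + t), F u * (u - t) ^ (-Q - 1)) -
        ∫ u in 0..(1 - t), F u * (u + t) ^ (-Q - 1) := by
  have hplus : Monotone fun r => F (r + t) := fun a b h => hF (by linarith)
  have hminus : Monotone fun r => F (r - t) := fun a b h => hF (by linarith)
  simp_rw [sub_mul]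
  rw [intervalIntegral.integral_sub
    (by simpa using hplus.intervalIntegrable_mul_rpow_add (c := 0) (s := -Q - 1) ht1 (by simpa))
    (by simpa using hminus.intervalIntegrable_mul_rpow_add (c := 0) (s := -Q - 1) ht1 (by simpa))]
  congr 1
  · have := intervalIntegral.integral_comp_add_right (a := t) (b := 1)
      (fun u => F u * (u - t) ^ (-Q - 1)) t
    simp only [add_sub_cancel_right] at this
    rw [this, two_mul]
  · have := intervalIntegral.integral_comp_sub_right (a := t) (b := 1)
      (fun u => F u * (u + t) ^ (-Q - 1)) t
    simp only [sub_add_cancel, sub_self] at this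
    rw [this]

lemma integral_mul_rpow_add_le (hF : Monotone F) (hF0 : ∀ u, 0 ≤ F u) (ht : 0 < t)
    (ht1 : t ≤ 1) :
    ∫ u in (2 * t)..(1 + t), F u * (u + t) ^ (-Q - 1) ≤
      (∫ u in 0..(1 - t), F u * (u + t) ^ (-Q - 1)) +
        ∫ u in (1 - t)..(1 + t), F u * (u + t) ^ (-Q - 1) := by
  have hint : ∀ a b, 0 ≤ a → a ≤ b →
      IntervalIntegrable (fun u => F u * (u + t) ^ (-Q - 1)) volume a b := fun a b ha hab =>
    hF.intervalIntegrable_mul_rpow_add hab (by linarith)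
  rw [intervalIntegral.integral_add_adjacent_intervals (hint 0 _ le_rfl (by linarith))
      (hint _ _ (by linarith) (by linarith)),
    ← intervalIntegral.integral_add_adjacent_intervals (hint 0 (2 * t) le_rfl (by linarith))
      (hint _ _ (by linarith) (by linarith))]
  have : 0 ≤ ∫ u in 0..(2 * t), F u * (u + t) ^ (-Q - 1) :=
    intervalIntegral.integral_nonneg (by linarith) fun u hu =>
      mul_nonneg (hF0 u) (Real.rpow_nonneg (by linarith [hu.1]) _)
  linarith

lemma integral_mul_rpow_sub_integral_mul_rpow_le (hQ : 0 ≤ Q) (hF : Monotone F)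
    (hF0 : ∀ u, 0 ≤ F u) (hFC : ∀ u, 0 < u → F u ≤ C * u ^ Q) (ht : 0 < t)
    (ht1 : t ≤ 1) :
    (∫ u in (2 * t)..(1 + t), F u * (u - t) ^ (-Q - 1)) -
        ∫ u in (2 * t)..(1 + t), F u * (u + t) ^ (-Q - 1) ≤
      C * (Q + 1) * 2 ^ (Q + 2) := by
  have hC : 0 ≤ C := by simpa using (hF0 1).trans (hFC 1 one_pos)
  have hab : 2 * t ≤ 1 + t := by linarith
  have hminus :
      IntervalIntegrable (fun u => F u * (u - t) ^ (-Q - 1)) volume (2 * t) (1 + t) := by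
    simpa [← sub_eq_add_neg] using
      hF.intervalIntegrable_mul_rpow_add (c := -t) (s := -Q - 1) hab (by linarith)
  have hplus :
      IntervalIntegrable (fun u => F u * (u + t) ^ (-Q - 1)) volume (2 * t) (1 + t) :=
    hF.intervalIntegrable_mul_rpow_add hab (by linarith)
  have hdiff := hminus.sub hplus
  rw [← intervalIntegral.integral_sub hminus hplus]
  simp_rw [← mul_sub] at hdiff ⊢
  calc ∫ u in (2 * t)..(1 + t), F u * ((u - t) ^ (-Q - 1) - (u + t) ^ (-Q - 1))
      ≤ ∫ u in (2 * t)..(1 + t), C * (Q + 1) * 2 ^ (Q + 3) * t * u ^ (-2 : ℝ) :=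
        intervalIntegral.integral_mono_on hab hdiff
          ((intervalIntegral.intervalIntegrable_rpow
            (Or.inr (notMem_uIcc_of_lt (by linarith) (by linarith)))).const_mul _)
          fun u hu => mul_rpow_sub_rpow_le hQ (hF0 u) (hFC u (by linarith [hu.1])) ht hu.1
    _ = C * (Q + 1) * 2 ^ (Q + 3) * t * ∫ u in (2 * t)..(1 + t), u ^ (-2 : ℝ) :=
        intervalIntegral.integral_const_mul _ _
    _ ≤ C * (Q + 1) * 2 ^ (Q + 3) * t * (2 * t)⁻¹ :=
        mul_le_mul_of_nonneg_left (integral_rpow_neg_two_le (by linarith) hab) (by positivity)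
    _ = C * (Q + 1) * 2 ^ (Q + 2) := by
        rw [show Q + 3 = (Q + 2) + 1 by ring, Real.rpow_add_one two_ne_zero]
        field_simp

lemma integral_mul_rpow_add_boundary_le (hQ : 0 ≤ Q) (hF : Monotone F) (hF0 : ∀ u, 0 ≤ F u)
    (hFC : ∀ u, 0 < u → F u ≤ C * u ^ Q) (ht : 0 < t) (ht1 : t ≤ 1) :
    ∫ u in (1 - t)..(1 + t), F u * (u + t) ^ (-Q - 1) ≤ C * 2 ^ (Q + 1) := by
  have hF2 : F 2 ≤ C * 2 ^ Q := hFC 2 two_pos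
  calc ∫ u in (1 - t)..(1 + t), F u * (u + t) ^ (-Q - 1)
      ≤ ∫ _ in (1 - t)..(1 + t), C * 2 ^ Q :=
        intervalIntegral.integral_mono_on (by linarith)
          (hF.intervalIntegrable_mul_rpow_add (by linarith) (by linarith)) intervalIntegrable_const
          fun u hu => ?_
    _ = C * 2 ^ Q * (2 * t) := by rw [intervalIntegral.integral_const, smul_eq_mul]; ring
    _ ≤ C * 2 ^ Q * 2 := mul_le_mul_of_nonneg_left (by linarith) ((hF0 2).trans hF2)
    _ = C * 2 ^ (Q + 1) := by rw [Real.rpow_add_one two_ne_zero]; ring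
  have hpow : (u + t) ^ (-Q - 1) ≤ 1 :=
    Real.rpow_le_one_of_one_le_of_nonpos (by linarith [hu.1]) (by linarith)
  calc F u * (u + t) ^ (-Q - 1) ≤ F 2 * 1 :=
        mul_le_mul (hF (by linarith [hu.2])) hpow (Real.rpow_nonneg (by linarith [hu.1]) _)
          (hF0 2)
    _ ≤ C * 2 ^ Q := by rwa [mul_one]

theorem integral_sub_shift_mul_rpow_le (hQ : 0 ≤ Q) (hF : Monotone F) (hF0 : ∀ u, 0 ≤ F u)
    (hFC : ∀ u, 0 < u → F u ≤ C * u ^ Q) (ht : 0 < t) (ht1 : t ≤ 1) :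
    ∫ r in t..1, (F (r + t) - F (r - t)) * r ^ (-Q - 1) ≤
      C * ((Q + 1) * 2 ^ (Q + 2) + 2 ^ (Q + 1)) := by
  rw [integral_sub_shift_mul_rpow hF ht ht1]
  linarith [integral_mul_rpow_sub_integral_mul_rpow_le hQ hF hF0 hFC ht ht1,
    integral_mul_rpow_add_le (Q := Q) hF hF0 ht ht1,
    integral_mul_rpow_add_boundary_le hQ hF hF0 hFC ht ht1]

end Shift

lemma QRegular.measureReal_ball_le {H : Measure X} [IsFiniteMeasure H] {Q c0 C0 : ℝ}
    (hreg : QRegular H Q c0 C0) (hQ : 0 ≤ Q) (hd : 0 < diam (univ : Set X)) (x : X) {u : ℝ}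
    (hu : 0 < u) :
    H.real (ball x u) ≤ max C0 (H.real univ / diam (univ : Set X) ^ Q) * u ^ Q := by
  obtain ⟨hc0, hcC, hball⟩ := hreg
  rcases lt_or_ge u (diam (univ : Set X)) with hud | hud
  · calc H.real (ball x u) ≤ C0 * u ^ Q :=
          ENNReal.toReal_le_of_le_ofReal (mul_nonneg (hc0.trans hcC).le (by positivity))
            (hball x u hu hud).2
      _ ≤ _ := mul_le_mul_of_nonneg_right (le_max_left _ _) (by positivity)
  · have hdQ : 0 < diam (univ : Set X) ^ Q := by positivity
    calc H.real (ball x u) ≤ H.real univ := measureReal_mono (subset_univ _)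
      _ = H.real univ / diam (univ : Set X) ^ Q * diam (univ : Set X) ^ Q := by field_simp
      _ ≤ _ := mul_le_mul (le_max_right _ _) (Real.rpow_le_rpow hd.le hud hQ)
          hdQ.le ((div_nonneg measureReal_nonneg hdQ.le).trans (le_max_right _ _))

lemma ball_eq_univ_of_diam_eq_zero {α : Type*} [PseudoMetricSpace α]
    (hb : Bornology.IsBounded (univ : Set α)) (hd : diam (univ : Set α) = 0) (x : α) {r : ℝ}
    (hr : 0 < r) : ball x r = univ :=
  eq_univ_of_forall fun _ =>
    mem_ball.2 ((dist_le_diam_of_mem hb trivial trivial).trans_lt (hd ▸ hr))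

theorem statement_6_general {X : Type*} [MetricSpace X] [MeasurableSpace X] [BorelSpace X]
    (H : Measure X) (Q c0 C0 : ℝ) (hQ : 0 < Q)
    (hbdd : Bornology.IsBounded (Set.univ : Set X))
    (hHfin : H Set.univ ≠ ⊤)
    (hreg : QRegular H Q c0 C0) :
    ∃ C' : ℝ, ∀ (x : X) (t : ℝ), 0 < t → t ≤ 1 →
      (∫ r in t..1,
        (H (Metric.ball x (r + t) \ Metric.ball x (r - t))).toReal * r ^ (-Q - 1)) ≤ C' := by
  have : IsFiniteMeasure H := ⟨hHfin.lt_top⟩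
  rcases (diam_nonneg (s := (univ : Set X))).eq_or_lt with hd | hd
  · -- `QRegular` is vacuous here, but then every ball of positive radius is all of `X`.
    refine ⟨0, fun x t ht ht1 =>
      (intervalIntegral.integral_zero_ae (ae_of_all _ fun r hr => ?_)).le⟩
    rw [uIoc_of_le ht1] at hr
    simp [ball_eq_univ_of_diam_eq_zero hbdd hd.symm x (sub_pos.2 hr.1)]
  · refine ⟨max C0 (H.real univ / diam (univ : Set X) ^ Q) *
      ((Q + 1) * 2 ^ (Q + 2) + 2 ^ (Q + 1)), fun x t ht ht1 => ?_⟩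
    have hannulus : ∀ r, (H (ball x (r + t) \ ball x (r - t))).toReal =
        H.real (ball x (r + t)) - H.real (ball x (r - t)) := fun r =>
      measureReal_sdiff (ball_subset_ball (by linarith)) measurableSet_ball
    simp_rw [hannulus]
    exact integral_sub_shift_mul_rpow_le hQ.le
      (fun a b hab => measureReal_mono (ball_subset_ball hab)) (fun _ => measureReal_nonneg)
      (fun u hu => hreg.measureReal_ball_le hQ.le hd x hu) ht ht1

theorem statement_6 {X : Type*} [MetricSpace X] [MeasurableSpace X] [BorelSpace X]
    (H : Measure X) (Q c0 C0 : ℝ) (hQ : 0 < Q)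
    (hbdd : Bornology.IsBounded (Set.univ : Set X))
    (hH0 : H Set.univ ≠ 0) (hHfin : H Set.univ ≠ ⊤)
    (hreg : QRegular H Q c0 C0) :
    ∃ C' : ℝ, ∀ (x : X) (t : ℝ), 0 < t → t ≤ 1 →
      (∫ r in t..1,
        (H (Metric.ball x (r + t) \ Metric.ball x (r - t))).toReal * r ^ (-Q - 1)) ≤ C' :=
  statement_6_general H Q c0 C0 hQ hbdd hHfin hreg

end Cutout
end
end

section
/- Assume diam(X) ≤ 1 and extend p by setting p(x,u) = 1 for u ≥ 1. There exists a constant C < ∞, depending only on γ, Q and the regularity constants c0, C0 (in particular independent of δ, x and y), such that for all distinct points x, y ∈ X and all 0 < δ < 1: P(x ∈ E_δ and y ∈ E_δ) ≤ C·p(x,δ)·p(y,δ)/p(x,d(x,y)). -/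
open MeasureTheory Metric Set Filter
open scoped ENNReal NNReal Topology

noncomputable section

namespace Cutout

variable {X Ω : Type*} [MetricSpace X] [MeasurableSpace X]

/-!
A point `z` survives in `E_t` iff the process has no point in the set `coverSet z t` of parameters
`(c, r)` with `r > t` and `z ∈ B(c, r)`, so `p(z, t) = exp (-μ (coverSet z t))` (void probability
of a Poisson process). Hence the joint survival probability of `x` and `y` is
`p(x, δ) p(y, δ) exp (μ (coverSet x δ ∩ coverSet y δ))`. A ball covering both points has radius
`r > d / 2`, `d = d(x, y)`: if `r > d` it covers `x` at scale `d`, which costs `-log p(x, d)`;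
otherwise its centre lies in `B(x, d)` and `r ∈ (d/2, d]`, a parameter set of intensity at most
`γ C0 d^Q ∫_{d/2}^d r^{-Q-1} dr ≤ γ C0 2^Q`.
-/

instance (Q : ℝ) : SFinite (rho Q) := by
  rw [rho]; infer_instance

lemma exp_neg_measure_union_le {α : Type*} [MeasurableSpace α] {μ : Measure α} {A B E : Set α}
    (hB : MeasurableSet B) (hA : μ A ≠ ⊤) (hB' : μ B ≠ ⊤) (hE : μ E ≠ ⊤) {K : ℝ≥0∞}
    (hK : K ≠ ⊤) (hAB : μ (A ∩ B) ≤ μ E + K) :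
    Real.exp (-(μ (A ∪ B)).toReal) ≤
      Real.exp K.toReal * Real.exp (-(μ A).toReal) * Real.exp (-(μ B).toReal) /
        Real.exp (-(μ E).toReal) := by
  have hinter_ne_top : μ (A ∩ B) ≠ ⊤ := ne_top_of_le_ne_top hA (measure_mono inter_subset_left)
  have hunion : (μ (A ∪ B)).toReal + (μ (A ∩ B)).toReal = (μ A).toReal + (μ B).toReal := by
    rw [← ENNReal.toReal_add (measure_union_ne_top hA hB') hinter_ne_top,
      ← ENNReal.toReal_add hA hB', measure_union_add_inter A hB]
  have hinter : (μ (A ∩ B)).toReal ≤ (μ E).toReal + K.toReal := by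
    rw [← ENNReal.toReal_add hE hK]
    exact ENNReal.toReal_mono (ENNReal.add_ne_top.2 ⟨hE, hK⟩) hAB
  rw [← Real.exp_add, ← Real.exp_add, ← Real.exp_sub, Real.exp_le_exp]
  linarith

section Geometry

variable {M : Type*} [PseudoMetricSpace M]

def coverSet (z : M) (t : ℝ) : Set (M × ℝ) :=
  {p | t < p.2 ∧ dist z p.1 < p.2}

lemma measurableSet_coverSet [MeasurableSpace M] [OpensMeasurableSpace M] (z : M) (t : ℝ) :
    MeasurableSet (coverSet z t) :=
  (measurableSet_lt measurable_const measurable_snd).inter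
    (measurableSet_lt ((continuous_const.dist continuous_id).measurable.comp measurable_fst)
      measurable_snd)

lemma coverSet_subset_prod_Ioi (z : M) (t : ℝ) : coverSet z t ⊆ univ ×ˢ Ioi t :=
  fun _ hp => ⟨trivial, hp.1⟩

/-- A ball covering both `x` and `y` has radius greater than `d(x, y) / 2`. -/
lemma coverSet_inter_subset (x y : M) (t : ℝ) :
    coverSet x t ∩ coverSet y t ⊆
      coverSet x (dist x y) ∪ ball x (dist x y) ×ˢ Ioc (dist x y / 2) (dist x y) := by
  rintro ⟨c, r⟩ ⟨⟨-, hxc⟩, ⟨-, hyc⟩⟩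
  have htri : dist x y ≤ dist x c + dist y c := dist_triangle_right x y c
  rcases lt_or_ge (dist x y) r with hr | hr
  · exact Or.inl ⟨hr, hxc⟩
  · exact Or.inr ⟨by rw [mem_ball, dist_comm]; linarith, by linarith, hr⟩

end Geometry

lemma mem_cutoutEt_iff {M : Type*} [MetricSpace M] (Y : Ω → Set (M × ℝ)) (z : M) (t : ℝ) (ω : Ω) :
    z ∈ cutoutEt Y t ω ↔ Y ω ∩ coverSet z t = ∅ := by
  simp only [cutoutEt, coverSet, mem_ofPred_eq, Metric.mem_ball, dist_comm z,
    eq_empty_iff_forall_notMem, mem_inter_iff, not_and]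

section Rho

variable {Q : ℝ}

lemma rho_le_of_subset_Ioi (hQ : -1 ≤ Q) {a : ℝ} (ha : 0 < a) {S : Set ℝ}
    (hS : MeasurableSet S) (hSa : S ⊆ Ioi a) :
    rho Q S ≤ ENNReal.ofReal (a ^ (-Q - 1)) * volume (S ∩ Ioo 0 1) := by
  rw [rho, withDensity_apply _ hS, Measure.restrict_restrict hS, ← setLIntegral_const]
  refine setLIntegral_mono' (hS.inter measurableSet_Ioo) fun r hr => ?_
  exact ENNReal.ofReal_le_ofReal
    (Real.rpow_le_rpow_of_nonpos ha (hSa hr.1).le (by linarith))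

lemma rho_Ioi_ne_top (hQ : -1 ≤ Q) {t : ℝ} (ht : 0 < t) : rho Q (Ioi t) ≠ ⊤ := by
  refine ne_top_of_le_ne_top ?_ (rho_le_of_subset_Ioi hQ ht measurableSet_Ioi subset_rfl)
  exact ENNReal.mul_ne_top ENNReal.ofReal_ne_top
    (ne_top_of_le_ne_top measure_Ioo_lt_top.ne (measure_mono inter_subset_right))

lemma rho_Ioi_eq_zero {t : ℝ} (ht : 1 ≤ t) : rho Q (Ioi t) = 0 := by
  rw [rho, withDensity_apply _ measurableSet_Ioi, Measure.restrict_restrict measurableSet_Ioi,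
    Ioi_inter_Ioo, Ioo_eq_empty (by simpa using ht), Measure.restrict_empty, lintegral_zero_measure]

lemma rho_Ioc_half_le (hQ : -1 ≤ Q) {d : ℝ} (hd : 0 < d) :
    rho Q (Ioc (d / 2) d) ≤ ENNReal.ofReal ((d / 2) ^ (-Q)) := by
  have hd2 : 0 < d / 2 := half_pos hd
  calc rho Q (Ioc (d / 2) d)
      ≤ ENNReal.ofReal ((d / 2) ^ (-Q - 1)) * volume (Ioc (d / 2) d) :=
        (rho_le_of_subset_Ioi hQ hd2 measurableSet_Ioc Ioc_subset_Ioi_self).trans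
          (mul_le_mul_right (measure_mono inter_subset_left) _)
    _ = ENNReal.ofReal ((d / 2) ^ (-Q)) := by
        rw [Real.volume_Ioc, ← ENNReal.ofReal_mul (by positivity), show d - d / 2 = d / 2 by ring,
          ← Real.rpow_add_one hd2.ne', sub_add_cancel]

end Rho

/-- The upper regularity bound survives at the radius `diam X` itself, by continuity from below. -/
lemma QRegular.measure_ball_le {H : Measure X} {Q c0 C0 : ℝ} (hreg : QRegular H Q c0 C0)
    (hQ : 0 ≤ Q) (x : X) {d : ℝ} (hd : 0 < d) (hdiam : d ≤ Metric.diam (univ : Set X)) :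
    H (ball x d) ≤ ENNReal.ofReal (C0 * d ^ Q) := by
  obtain ⟨u, hu_mono, hu_mem, hu_lim⟩ := exists_seq_strictMono_tendsto' hd
  have hball : ball x d = ⋃ n, ball x (u n) := by
    refine Subset.antisymm (fun z hz => ?_)
      (iUnion_subset fun n => ball_subset_ball (hu_mem n).2.le)
    obtain ⟨n, hn⟩ := (hu_lim.eventually (lt_mem_nhds (mem_ball.1 hz))).exists
    exact mem_iUnion.2 ⟨n, hn⟩
  have hC0 : 0 ≤ C0 := (hreg.1.trans hreg.2.1).le
  rw [hball, Monotone.measure_iUnion fun m n h => ball_subset_ball (hu_mono.monotone h)]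
  refine iSup_le fun n => ?_
  obtain ⟨hun, hund⟩ := hu_mem n
  refine (hreg.2.2 x (u n) hun (hund.trans_le hdiam)).2.trans (ENNReal.ofReal_le_ofReal ?_)
  gcongr

section Intensity

variable {H : Measure X} {Q : ℝ}

lemma prod_rho_coverSet_ne_top (hH : H univ ≠ ⊤) (hQ : -1 ≤ Q) (z : X) {t : ℝ} (ht : 0 < t) :
    H.prod (rho Q) (coverSet z t) ≠ ⊤ := by
  refine ne_top_of_le_ne_top ?_ (measure_mono (coverSet_subset_prod_Ioi z t))
  rw [Measure.prod_prod]
  exact ENNReal.mul_ne_top hH (rho_Ioi_ne_top hQ ht)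

lemma prod_rho_coverSet_eq_zero (z : X) {t : ℝ} (ht : 1 ≤ t) :
    H.prod (rho Q) (coverSet z t) = 0 :=
  measure_mono_null (coverSet_subset_prod_Ioi z t)
    (by rw [Measure.prod_prod, rho_Ioi_eq_zero ht, mul_zero])

lemma QRegular.prod_rho_ball_prod_Ioc_half_le {c0 C0 : ℝ} (hreg : QRegular H Q c0 C0)
    (hQ : 0 ≤ Q) (x : X) {d : ℝ} (hd : 0 < d) (hdiam : d ≤ Metric.diam (univ : Set X)) :
    H.prod (rho Q) (ball x d ×ˢ Ioc (d / 2) d) ≤ ENNReal.ofReal (C0 * 2 ^ Q) := by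
  have hC0 : 0 ≤ C0 := (hreg.1.trans hreg.2.1).le
  rw [Measure.prod_prod]
  calc H (ball x d) * rho Q (Ioc (d / 2) d)
      ≤ ENNReal.ofReal (C0 * d ^ Q) * ENNReal.ofReal ((d / 2) ^ (-Q)) :=
        mul_le_mul' (hreg.measure_ball_le hQ x hd hdiam) (rho_Ioc_half_le (by linarith) hd)
    _ = ENNReal.ofReal (C0 * 2 ^ Q) := by
        rw [← ENNReal.ofReal_mul (by positivity), Real.rpow_neg (by positivity),
          Real.div_rpow hd.le zero_le_two]
        congr 1
        field_simp

lemma smul_prod_rho_coverSet_ne_top {c : ℝ≥0∞} (hc : c ≠ ⊤) (hH : H univ ≠ ⊤) (hQ : -1 ≤ Q)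
    (z : X) {t : ℝ} (ht : 0 < t) : (c • H.prod (rho Q)) (coverSet z t) ≠ ⊤ := by
  rw [Measure.smul_apply, smul_eq_mul]
  exact ENNReal.mul_ne_top hc (prod_rho_coverSet_ne_top hH hQ z ht)

end Intensity

section Poisson

variable {M : Type*} [MeasurableSpace M] [MeasurableSpace Ω] {P : Measure Ω}
  {Y : Ω → Set (M × ℝ)} {μ : Measure (M × ℝ)}

lemma IsPoissonPP.toReal_measure_inter_eq_empty (hY : IsPoissonPP P Y μ) {S : Set (M × ℝ)}
    (hS : MeasurableSet S) (hμS : μ S ≠ ⊤) :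
    (P {ω | Y ω ∩ S = ∅}).toReal = Real.exp (-(μ S).toReal) := by
  simpa [Real.exp_nonneg] using congrArg ENNReal.toReal (hY.poisson S hS hμS 0)

lemma IsPoissonPP.toReal_measure_mem_cutoutEt [MetricSpace M] [OpensMeasurableSpace M]
    (hY : IsPoissonPP P Y μ) (z : M) (t : ℝ) (hμ : μ (coverSet z t) ≠ ⊤) :
    (P {ω | z ∈ cutoutEt Y t ω}).toReal = Real.exp (-(μ (coverSet z t)).toReal) := by
  simp only [mem_cutoutEt_iff]
  exact hY.toReal_measure_inter_eq_empty (measurableSet_coverSet z t) hμ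

lemma IsPoissonPP.toReal_measure_mem_cutoutEt_and [MetricSpace M] [OpensMeasurableSpace M]
    (hY : IsPoissonPP P Y μ) (x y : M) (t : ℝ) (hμx : μ (coverSet x t) ≠ ⊤)
    (hμy : μ (coverSet y t) ≠ ⊤) :
    (P {ω | x ∈ cutoutEt Y t ω ∧ y ∈ cutoutEt Y t ω}).toReal =
      Real.exp (-(μ (coverSet x t ∪ coverSet y t)).toReal) := by
  simp only [mem_cutoutEt_iff, ← union_empty_iff, ← inter_union_distrib_left]
  exact hY.toReal_measure_inter_eq_empty
    ((measurableSet_coverSet x t).union (measurableSet_coverSet y t))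
    (measure_union_ne_top hμx hμy)

end Poisson

lemma IsPoissonPP.extended_survival_eq [OpensMeasurableSpace X] [MeasurableSpace Ω]
    {P : Measure Ω} {Y : Ω → Set (X × ℝ)} {H : Measure X} {Q : ℝ} {c : ℝ≥0∞}
    (hY : IsPoissonPP P Y (c • H.prod (rho Q))) (hc : c ≠ ⊤) (hH : H univ ≠ ⊤) (hQ : -1 ≤ Q)
    (z : X) {t : ℝ} (ht : 0 < t) :
    (if 1 ≤ t then 1 else (P {ω | z ∈ cutoutEt Y t ω}).toReal) =
      Real.exp (-((c • H.prod (rho Q)) (coverSet z t)).toReal) := by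
  split_ifs with h1t
  · simp [prod_rho_coverSet_eq_zero z h1t]
  · exact hY.toReal_measure_mem_cutoutEt z t (smul_prod_rho_coverSet_ne_top hc hH hQ z ht)

theorem statement_9_general {X Ω : Type*} [MetricSpace X] [MeasurableSpace X] [BorelSpace X]
    [MeasurableSpace Ω] (P : Measure Ω)
    (H : Measure X) (Q c0 C0 γ : ℝ) (hQ : 0 < Q)
    (hbdd : Bornology.IsBounded (Set.univ : Set X))
    (hHfin : H Set.univ ≠ ⊤)
    (hreg : QRegular H Q c0 C0)
    (Y : Ω → Set (X × ℝ))
    (hY : IsPoissonPP P Y (ENNReal.ofReal γ • (H.prod (rho Q)))) :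
    ∃ C : ℝ, ∀ (x y : X) (δ : ℝ), x ≠ y → 0 < δ → δ < 1 →
      (P {ω | x ∈ cutoutEt Y δ ω ∧ y ∈ cutoutEt Y δ ω}).toReal ≤
        C * (P {ω | x ∈ cutoutEt Y δ ω}).toReal * (P {ω | y ∈ cutoutEt Y δ ω}).toReal /
          (if 1 ≤ dist x y then 1 else (P {ω | x ∈ cutoutEt Y (dist x y) ω}).toReal) := by
  set μ := ENNReal.ofReal γ • H.prod (rho Q)
  set K := ENNReal.ofReal γ * ENNReal.ofReal (C0 * 2 ^ Q)
  have hQ' : -1 ≤ Q := by linarith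
  have hμ : ∀ z {t : ℝ}, 0 < t → μ (coverSet z t) ≠ ⊤ := fun z _ ht =>
    smul_prod_rho_coverSet_ne_top ENNReal.ofReal_ne_top hHfin hQ' z ht
  refine ⟨Real.exp K.toReal, fun x y δ hxy hδ _ => ?_⟩
  have hd : 0 < dist x y := dist_pos.2 hxy
  have hinter : μ (coverSet x δ ∩ coverSet y δ) ≤ μ (coverSet x (dist x y)) + K :=
    calc μ (coverSet x δ ∩ coverSet y δ)
        ≤ μ (coverSet x (dist x y)) + μ (ball x (dist x y) ×ˢ Ioc (dist x y / 2) (dist x y)) :=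
          (measure_mono (coverSet_inter_subset x y δ)).trans (measure_union_le _ _)
      _ ≤ μ (coverSet x (dist x y)) + K :=
          add_le_add_right (mul_le_mul_right (hreg.prod_rho_ball_prod_Ioc_half_le hQ.le x hd
            (dist_le_diam_of_mem hbdd trivial trivial)) _) _
  rw [hY.toReal_measure_mem_cutoutEt_and x y δ (hμ x hδ) (hμ y hδ),
    hY.toReal_measure_mem_cutoutEt x δ (hμ x hδ), hY.toReal_measure_mem_cutoutEt y δ (hμ y hδ),
    hY.extended_survival_eq ENNReal.ofReal_ne_top hHfin hQ' x hd]
  exact exp_neg_measure_union_le (measurableSet_coverSet y δ) (hμ x hδ) (hμ y hδ) (hμ x hd)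
    (ENNReal.mul_ne_top ENNReal.ofReal_ne_top ENNReal.ofReal_ne_top) hinter

theorem statement_9 {X Ω : Type*} [MetricSpace X] [MeasurableSpace X] [BorelSpace X]
    [MeasurableSpace Ω] (P : Measure Ω) [IsProbabilityMeasure P]
    (H : Measure X) (Q c0 C0 γ : ℝ) (hQ : 0 < Q) (hγ : 0 < γ)
    (hbdd : Bornology.IsBounded (Set.univ : Set X))
    (hH0 : H Set.univ ≠ 0) (hHfin : H Set.univ ≠ ⊤)
    (hreg : QRegular H Q c0 C0)
    (Y : Ω → Set (X × ℝ))
    (hY : IsPoissonPP P Y (ENNReal.ofReal γ • (H.prod (rho Q))))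
    (hdiam : Metric.diam (Set.univ : Set X) ≤ 1) :
    ∃ C : ℝ, ∀ (x y : X) (δ : ℝ), x ≠ y → 0 < δ → δ < 1 →
      (P {ω | x ∈ cutoutEt Y δ ω ∧ y ∈ cutoutEt Y δ ω}).toReal ≤
        C * (P {ω | x ∈ cutoutEt Y δ ω}).toReal * (P {ω | y ∈ cutoutEt Y δ ω}).toReal /
          (if 1 ≤ dist x y then 1 else (P {ω | x ∈ cutoutEt Y (dist x y) ω}).toReal) :=
  statement_9_general P H Q c0 C0 γ hQ hbdd hHfin hreg Y hY

end Cutout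
end
end
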